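/- For a one-hidden-layer ReLU network f(x) = W2 * max(0, W1 x + b1) + b2 with K = 2 output classes, suppose x is classified as class 1 (f_1(x) > f_2(x)) and (W1 x + b1)_i != 0 for all i. Let V = W2 Sigma(x) W1, c = W2 Sigma(x) b1 + b2, d_D = (f_1(x) - f_2(x)) / ||V_1 - V_2||_q and d_B = min_i |(W1 x + b1)_i| / ||(W1)_i||_q. If d_B <= d_D, then f_1(x + delta) > f_2(x + delta) for all delta with ||delta||_p < d_B. -/

import Mathlib

open scoped BigOperators ENNReal

/-!
Hölder's inequality bounds `|⟨w, δ⟩|` by `‖w‖_q ‖δ‖_p`. Applied to the rows of `W1`, a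
perturbation with `‖δ‖_p < d_B` changes no pre-activation `(W1 x + b1)_i` by as much as its
absolute value, so no ReLU switches and `f (x + δ) = f x + V δ`. Applied to `V_1 - V_2`, using
`d_B ≤ d_D`, the margin `f_1 - f_2` moves by less than its value at `x`, which stays positive.
-/

/-- The `l_p` norm of a vector in `ℝ^d`. -/
noncomputable def pnorm (p : ℝ≥0∞) {d : ℕ} (x : Fin d → ℝ) : ℝ :=
  ‖(WithLp.equiv p (Fin d → ℝ)).symm x‖

/-- Standard inner product on `ℝ^d`. -/
noncomputable def dotp {d : ℕ} (w x : Fin d → ℝ) : ℝ := ∑ i, w i * x i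

/-- Hölder's inequality, obtained from the duality pairing of `ℓ^q` and `ℓ^p`, which also covers
the endpoint exponents `1` and `∞`. -/
theorem abs_dotp_le_pnorm_mul_pnorm {d : ℕ} {p q : ℝ≥0∞} [hpq : p.HolderConjugate q]
    (w x : Fin d → ℝ) : |dotp w x| ≤ pnorm q w * pnorm p x := by
  have : Fact (1 ≤ p) := ⟨hpq.one_le⟩
  have : Fact (1 ≤ q) := ⟨hpq.symm.one_le⟩
  let e : lp (fun _ : Fin d => ℝ) q := Equiv.lpPiLp.symm (WithLp.toLp q w)
  let f : lp (fun _ : Fin d => ℝ) p := Equiv.lpPiLp.symm (WithLp.toLp p x)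
  have hB : ∀ _ : Fin d, ‖ContinuousLinearMap.mul ℝ ℝ‖ ≤ (1 : NNReal) := fun _ => by simp
  set P := lp.dualPairing q p (fun _ => ContinuousLinearMap.mul ℝ ℝ) hB
  have hP : dotp w x = P e f := by
    simp [P, lp.dualPairing_apply, tsum_fintype, dotp, e, f, coe_equiv_lpPiLp_symm]
  have he : ‖e‖ = pnorm q w := by simp [← equiv_lpPiLp_norm, e, pnorm]
  have hf : ‖f‖ = pnorm p x := by simp [← equiv_lpPiLp_norm, f, pnorm]
  calc |dotp w x| = ‖P e f‖ := by rw [hP, Real.norm_eq_abs]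
    _ ≤ ‖P‖ * ‖e‖ * ‖f‖ := P.le_opNorm₂ e f
    _ ≤ 1 * ‖e‖ * ‖f‖ := by gcongr; exact_mod_cast lp.norm_dualPairing _ hB
    _ = pnorm q w * pnorm p x := by rw [one_mul, he, hf]

theorem pnorm_nonneg (p : ℝ≥0∞) [Fact (1 ≤ p)] {d : ℕ} (x : Fin d → ℝ) : 0 ≤ pnorm p x :=
  norm_nonneg _

theorem abs_dotp_lt_of_pnorm_lt {d : ℕ} {p q : ℝ≥0∞} [hpq : p.HolderConjugate q]
    {w x : Fin d → ℝ} {s c : ℝ} (hx : pnorm p x < s) (hs : s ≤ c / pnorm q w) :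
    |dotp w x| < c := by
  have : Fact (1 ≤ p) := ⟨hpq.one_le⟩
  have : Fact (1 ≤ q) := ⟨hpq.symm.one_le⟩
  have hx0 := pnorm_nonneg p x
  rcases (pnorm_nonneg q w).eq_or_lt with hw | hw
  · -- `c / 0 = 0`, so `pnorm p x < s` is impossible
    rw [← hw, div_zero] at hs
    linarith
  · calc |dotp w x| ≤ pnorm q w * pnorm p x := abs_dotp_le_pnorm_mul_pnorm w x
      _ < pnorm q w * s := by gcongr
      _ ≤ pnorm q w * (c / pnorm q w) := by gcongr
      _ = c := mul_div_cancel₀ c hw.ne'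

theorem max_zero_eq_ite_mul (a : ℝ) : max 0 a = (if 0 < a then 1 else 0) * a := by
  split_ifs with ha
  · simp [ha.le]
  · simp [not_lt.mp ha]

theorem pos_add_iff_of_abs_lt {a t : ℝ} (h : |t| < |a|) : 0 < a + t ↔ 0 < a := by
  constructor <;> intro h' <;> cases abs_cases a <;> cases abs_cases t <;> linarith

theorem max_zero_add_of_abs_lt {a t : ℝ} (h : |t| < |a|) :
    max 0 (a + t) = max 0 a + (if 0 < a then 1 else 0) * t := by
  simp only [max_zero_eq_ite_mul, pos_add_iff_of_abs_lt h, mul_add]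

theorem dotp_add_right {d : ℕ} (w x y : Fin d → ℝ) : dotp w (x + y) = dotp w x + dotp w y := by
  simp only [dotp, Pi.add_apply, mul_add, Finset.sum_add_distrib]

theorem dotp_sub_left {d : ℕ} (v w x : Fin d → ℝ) : dotp (v - w) x = dotp v x - dotp w x := by
  simp only [dotp, Pi.sub_apply, sub_mul, Finset.sum_sub_distrib]

theorem dotp_relu_add_of_abs_lt {d n : ℕ} (W1 : Fin n → Fin d → ℝ) (b1 w2 : Fin n → ℝ)
    (x δ v : Fin d → ℝ)
    (hv : ∀ j, v j = ∑ i, w2 i * (if 0 < dotp (W1 i) x + b1 i then (1 : ℝ) else 0) * W1 i j)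
    (hδ : ∀ i, |dotp (W1 i) δ| < |dotp (W1 i) x + b1 i|) :
    dotp w2 (fun i => max 0 (dotp (W1 i) (x + δ) + b1 i)) =
      dotp w2 (fun i => max 0 (dotp (W1 i) x + b1 i)) + dotp v δ := by
  set σ : Fin n → ℝ := fun i => if 0 < dotp (W1 i) x + b1 i then 1 else 0
  have hrelu : (fun i => max 0 (dotp (W1 i) (x + δ) + b1 i)) =
      (fun i => max 0 (dotp (W1 i) x + b1 i)) + (fun i => σ i * dotp (W1 i) δ) := by
    ext i
    rw [dotp_add_right, add_right_comm, max_zero_add_of_abs_lt (hδ i)]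
    rfl
  have hlin : dotp w2 (fun i => σ i * dotp (W1 i) δ) = dotp v δ := by
    have hv' : v = fun j => ∑ i, w2 i * σ i * W1 i j := funext hv
    simp only [hv', dotp, Finset.mul_sum, Finset.sum_mul]
    rw [Finset.sum_comm]
    exact Finset.sum_congr rfl fun _ _ => Finset.sum_congr rfl fun _ _ => by ring
  rw [hrelu, dotp_add_right, hlin]

theorem stmt9_general {d n : ℕ} (p q : ℝ≥0∞) (hpq : 1/p + 1/q = 1)
    (hn : 0 < n) (W1 : Fin n → Fin d → ℝ) (b1 : Fin n → ℝ)
    (W2 : Fin 2 → Fin n → ℝ) (b2 : Fin 2 → ℝ) (x : Fin d → ℝ)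
    (f : (Fin d → ℝ) → Fin 2 → ℝ)
    (hf : ∀ z r, f z r = dotp (W2 r) (fun i => max 0 (dotp (W1 i) z + b1 i)) + b2 r)
    (V : Fin 2 → Fin d → ℝ)
    (hV : ∀ r j, V r j = ∑ i, W2 r i *
        (if 0 < dotp (W1 i) x + b1 i then (1 : ℝ) else 0) * W1 i j)
    (dD dB : ℝ)
    (hdD : dD = (f x 0 - f x 1) / pnorm q (V 0 - V 1))
    (hdB : dB = Finset.univ.inf' ⟨⟨0, hn⟩, Finset.mem_univ _⟩
        (fun i : Fin n => |dotp (W1 i) x + b1 i| / pnorm q (W1 i)))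
    (hBD : dB ≤ dD) :
    ∀ δ : Fin d → ℝ, pnorm p δ < dB → f (x + δ) 1 < f (x + δ) 0 := by
  intro δ hδ
  have : p.HolderConjugate q := ⟨by simpa [one_div] using hpq⟩
  have hpattern : ∀ i, |dotp (W1 i) δ| < |dotp (W1 i) x + b1 i| := fun i =>
    abs_dotp_lt_of_pnorm_lt hδ (hdB ▸ Finset.inf'_le _ (Finset.mem_univ i))
  have hmargin : |dotp (V 0 - V 1) δ| < f x 0 - f x 1 :=
    abs_dotp_lt_of_pnorm_lt hδ (hdD ▸ hBD)
  have hlocal : ∀ r, f (x + δ) r = f x r + dotp (V r) δ := fun r => by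
    rw [hf, hf, dotp_relu_add_of_abs_lt W1 b1 (W2 r) x δ (V r) (hV r) hpattern, add_right_comm]
  rw [dotp_sub_left] at hmargin
  rw [hlocal, hlocal]
  linarith [neg_abs_le (dotp (V 0) δ - dotp (V 1) δ)]

/-- Robustness guarantee for a one-hidden-layer ReLU network with two classes:
if d_B ≤ d_D then every perturbation of norm < d_B keeps the decision. -/
theorem stmt9 {d n : ℕ} (p q : ℝ≥0∞) (hp : 1 ≤ p) (hpq : 1/p + 1/q = 1)
    (hn : 0 < n) (W1 : Fin n → Fin d → ℝ) (b1 : Fin n → ℝ)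
    (W2 : Fin 2 → Fin n → ℝ) (b2 : Fin 2 → ℝ) (x : Fin d → ℝ)
    (f : (Fin d → ℝ) → Fin 2 → ℝ)
    (hf : ∀ z r, f z r = dotp (W2 r) (fun i => max 0 (dotp (W1 i) z + b1 i)) + b2 r)
    (hx : ∀ i : Fin n, dotp (W1 i) x + b1 i ≠ 0)
    (hW1 : ∀ i : Fin n, W1 i ≠ 0)
    (hclass : f x 1 < f x 0)
    (V : Fin 2 → Fin d → ℝ)
    (hV : ∀ r j, V r j = ∑ i, W2 r i *
        (if 0 < dotp (W1 i) x + b1 i then (1 : ℝ) else 0) * W1 i j)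
    (hV12 : V 0 ≠ V 1)
    (dD dB : ℝ)
    (hdD : dD = (f x 0 - f x 1) / pnorm q (V 0 - V 1))
    (hdB : dB = Finset.univ.inf' ⟨⟨0, hn⟩, Finset.mem_univ _⟩
        (fun i : Fin n => |dotp (W1 i) x + b1 i| / pnorm q (W1 i)))
    (hBD : dB ≤ dD) :
    ∀ δ : Fin d → ℝ, pnorm p δ < dB → f (x + δ) 1 < f (x + δ) 0 :=
  stmt9_general p q hpq hn W1 b1 W2 b2 x f hf V hV dD dB hdD hdB hBD
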